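/- Let L be a Latin square of order n, let 1 ≤ m ≤ n, and let R be a set of rows and C a set of columns of L with |R| + |C| = n + m. Then every symbol occurs at least m times among the entries L(r, c) with r ∈ R and c ∈ C (counted with multiplicity over the cells (r, c) ∈ R × C). -/

import Mathlib

/-! The cells holding a fixed symbol `s` form the graph of a permutation `σ` of `Fin n`, so
the cells of `R × C` holding `s` correspond to the rows in `R ∩ σ⁻¹(C)`, and by
inclusion–exclusion `|R ∩ σ⁻¹(C)| ≥ |R| + |C| - n = m`. -/

/-- A Latin square of order n: each symbol occurs exactly once in every row and
exactly once in every column. -/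
def IsLatinSquare {n : ℕ} (L : Fin n → Fin n → Fin n) : Prop :=
  (∀ i : Fin n, Function.Bijective fun c => L i c) ∧
  (∀ c : Fin n, Function.Bijective fun i => L i c)

namespace Finset

variable {α β : Type*}

theorem card_filter_product_eq_card_filter_of_graph (R : Finset α) (C : Finset β)
    (p : α × β → Prop) [DecidablePred p] (f : α → β) [DecidablePred (f · ∈ C)]
    (hp : ∀ a b, p (a, b) ↔ b = f a) :
    ((R ×ˢ C).filter p).card = (R.filter (f · ∈ C)).card :=
  card_nbij' Prod.fst (fun a => (a, f a))
    (fun x hx => by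
      simp only [coe_filter, mem_product, Set.mem_ofPred_eq, hp] at hx ⊢
      exact ⟨hx.1.1, hx.2 ▸ hx.1.2⟩)
    (fun _ _ => by simp_all)
    (fun x hx => by
      simp only [coe_filter, mem_product, Set.mem_ofPred_eq, hp] at hx
      exact Prod.ext rfl hx.2.symm)
    (fun a _ => rfl)

theorem card_add_card_le_card_filter_add_card [Fintype α] [DecidableEq α] [DecidableEq β]
    {f : α → β} (hf : Function.Bijective f) (R : Finset α) (C : Finset β) :
    R.card + C.card ≤ (R.filter (f · ∈ C)).card + Fintype.card α := by
  let e := Equiv.ofBijective f hf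
  have hfilter : R.filter (f · ∈ C) = R ∩ C.map e.symm.toEmbedding := by
    ext a
    simp [e]
  have hunion := card_le_univ (R ∪ C.map e.symm.toEmbedding)
  have hincl := card_inter_add_card_union R (C.map e.symm.toEmbedding)
  rw [card_map] at hincl
  rw [hfilter]
  omega

end Finset

namespace IsLatinSquare

variable {n : ℕ} {L : Fin n → Fin n → Fin n}

noncomputable def colOf (hL : IsLatinSquare L) (s r : Fin n) : Fin n :=
  (Equiv.ofBijective _ (hL.1 r)).symm s

theorem eq_iff_eq_colOf (hL : IsLatinSquare L) {s r c : Fin n} :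
    L r c = s ↔ c = hL.colOf s r := by
  rw [colOf, Equiv.eq_symm_apply, Equiv.ofBijective_apply]

theorem colOf_injective (hL : IsLatinSquare L) (s : Fin n) :
    Function.Injective (hL.colOf s) := fun r₁ _ h =>
  (hL.2 (hL.colOf s r₁)).1 <|
    (hL.eq_iff_eq_colOf.2 rfl).trans (hL.eq_iff_eq_colOf.2 h).symm

end IsLatinSquare

theorem latin_square_submatrix_symbols_general {n m : ℕ}
    (L : Fin n → Fin n → Fin n) (hL : IsLatinSquare L)
    (R C : Finset (Fin n)) (hRC : R.card + C.card = n + m) :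
    ∀ s : Fin n, m ≤ ((R ×ˢ C).filter fun p => L p.1 p.2 = s).card := by
  intro s
  rw [Finset.card_filter_product_eq_card_filter_of_graph R C _ (hL.colOf s)
    fun _ _ => hL.eq_iff_eq_colOf]
  have hcount := Finset.card_add_card_le_card_filter_add_card
    (Finite.injective_iff_bijective.1 (hL.colOf_injective s)) R C
  rw [Fintype.card_fin] at hcount
  omega

/-- If R is a set of rows and C a set of columns of a Latin square L of order n with
|R| + |C| = n + m, where 1 ≤ m ≤ n, then every symbol occurs at least m times among
the cells of R × C. -/
theorem latin_square_submatrix_symbols {n m : ℕ} (hm : 1 ≤ m) (hmn : m ≤ n)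
    (L : Fin n → Fin n → Fin n) (hL : IsLatinSquare L)
    (R C : Finset (Fin n)) (hRC : R.card + C.card = n + m) :
    ∀ s : Fin n, m ≤ ((R ×ˢ C).filter fun p => L p.1 p.2 = s).card :=
  latin_square_submatrix_symbols_general L hL R C hRC
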